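/- arXiv:2402.09903 — 5 statements merged into one kernel-verified Lean document; each statement's English description precedes it below -/
import Mathlib

section
/- For positive integers k and r with r ≤ k, and an integer s with 0 ≤ s ≤ r, the number of compositions of k into exactly r parts having exactly s parts equal to 1 is binom(r, s) · binom(k - r - 1, r - s - 1). -/
/-!
Record the set `S` of positions of the parts equal to `1`: there are `binom(r, s)` choices.
Every other part is at least `2`, so subtracting `1` from the parts on `S` and `2` from the others
identifies the compositions with ones exactly at `S` with the tuples of naturals supported off `S`
summing to `k - (2r - s)`. By stars and bars these number
`multichoose(r - s, k - 2r + s) = binom(k - r - 1, r - s - 1)`. When `k < 2r - s` there is no such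
composition and the binomial vanishes; `binom(-1, -1) = 1` is the case `k = r = s`.
-/

/-- Integer binomial coefficient `binom(a, b)`, equal to `0` when `b < 0` or
`b > a`, except for the convention `binom(-1, -1) = 1` used in the paper. -/
def ibinom (a b : ℤ) : ℤ :=
  if a = -1 ∧ b = -1 then 1
  else if 0 ≤ b ∧ b ≤ a then (a.toNat.choose b.toNat : ℤ)
  else 0

open Finset

lemma ibinom_natCast_of_le {a b : ℕ} (h : b ≤ a) : ibinom a b = a.choose b := by
  rw [ibinom, if_neg (by omega), if_pos (by omega)]
  simp

lemma ibinom_eq_zero_of_lt {a b : ℤ} (h : a < b) : ibinom a b = 0 := by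
  rw [ibinom, if_neg (by omega), if_neg (by omega)]

lemma ibinom_add_sub_one_sub_one (m n : ℕ) :
    ibinom ((m : ℤ) + n - 1) ((m : ℤ) - 1) = m.multichoose n := by
  rcases m with _ | m
  · rcases n with _ | n <;> simp [ibinom]
  · rw [show ((m + 1 : ℕ) : ℤ) + n - 1 = ((m + n : ℕ) : ℤ) by push_cast; ring,
      show ((m + 1 : ℕ) : ℤ) - 1 = m by push_cast; ring, ibinom_natCast_of_le (by omega),
      Nat.multichoose_eq, Nat.add_right_comm, Nat.add_sub_cancel, Nat.choose_symm_add]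

lemma card_piAntidiag_nat {ι : Type*} [DecidableEq ι] (s : Finset ι) (n : ℕ) :
    #(piAntidiag s n) = (#s).multichoose n := by
  rw [← card_finsuppAntidiag_nat_eq_multichoose, finsuppAntidiag, card_map, card_attach]

section PiAntidiag

variable {ι : Type*} [Fintype ι] [DecidableEq ι]

lemma mem_piAntidiag_iff_sum_univ {M : Type*} [AddCommMonoid M] [HasAntidiagonal M]
    [DecidableEq M] {s : Finset ι} {n : M} {f : ι → M} :
    f ∈ piAntidiag s n ↔ ∑ i, f i = n ∧ ∀ i, f i ≠ 0 → i ∈ s := by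
  rw [mem_piAntidiag]
  refine and_congr_left fun hsupp => ?_
  rw [sum_subset (subset_univ s) fun i _ hi => not_imp_comm.1 (hsupp i) hi]

lemma card_filter_piAntidiag_le_eqOn (w : ι → ℕ) (S : Finset ι) (n : ℕ) :
    #{f ∈ piAntidiag univ (∑ i, w i + n) | (∀ i, w i ≤ f i) ∧ ∀ i ∈ S, f i = w i} =
      #(piAntidiag Sᶜ n) := by
  refine card_nbij' (· - w) (· + w) ?_ ?_ ?_ ?_
  · intro f hf
    simp only [coe_filter, mem_piAntidiag_iff_sum_univ, Set.mem_ofPred_eq] at hf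
    obtain ⟨⟨hsum, -⟩, hwf, hS⟩ := hf
    rw [mem_coe, mem_piAntidiag_iff_sum_univ]
    refine ⟨?_, fun i hi => mem_compl.2 fun hiS => hi (by simp [hS i hiS])⟩
    simp only [Pi.sub_apply]
    rw [sum_tsub_distrib _ fun i _ => hwf i, hsum, add_tsub_cancel_left]
  · intro g hg
    rw [mem_coe, mem_piAntidiag_iff_sum_univ] at hg
    simp only [coe_filter, mem_piAntidiag_iff_sum_univ, Set.mem_ofPred_eq, Pi.add_apply]
    refine ⟨⟨?_, fun i _ => mem_univ i⟩, fun i => Nat.le_add_left _ _, fun i hi => ?_⟩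
    · rw [sum_add_distrib, hg.1, add_comm]
    · rw [not_imp_comm.1 (hg.2 i) (notMem_compl.2 hi), zero_add]
  · intro f hf
    simp only [coe_filter, Set.mem_ofPred_eq] at hf
    exact tsub_add_cancel_of_le hf.2.1
  · intro g _
    exact add_tsub_cancel_right g w

end PiAntidiag

section Compositions

variable {ι : Type*} [DecidableEq ι]

def onesElseTwos (S : Finset ι) (i : ι) : ℕ := if i ∈ S then 1 else 2

lemma onesElseTwos_of_mem {S : Finset ι} {i : ι} (h : i ∈ S) : onesElseTwos S i = 1 := if_pos h

lemma onesElseTwos_of_notMem {S : Finset ι} {i : ι} (h : i ∉ S) : onesElseTwos S i = 2 :=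
  if_neg h

variable [Fintype ι]

lemma sum_onesElseTwos (S : Finset ι) : ∑ i, onesElseTwos S i = #S + 2 * #Sᶜ := by
  rw [← sum_add_sum_compl S, sum_congr rfl fun i hi => onesElseTwos_of_mem hi,
    sum_congr rfl fun i hi => onesElseTwos_of_notMem (mem_compl.1 hi)]
  simp [mul_comm]

lemma pos_and_filter_eq_one_eq_iff {f : ι → ℕ} {S : Finset ι} :
    ((∀ i, 0 < f i) ∧ ({i | f i = 1} : Finset ι) = S) ↔
      (∀ i, onesElseTwos S i ≤ f i) ∧ ∀ i ∈ S, f i = onesElseTwos S i := by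
  constructor
  · rintro ⟨hpos, rfl⟩
    refine ⟨fun i => ?_, fun i hi => ?_⟩
    · have := hpos i
      by_cases h : f i = 1 <;> simp [onesElseTwos, h]; omega
    · simp_all [onesElseTwos]
  · rintro ⟨hle, hS⟩
    refine ⟨fun i => ?_, ?_⟩
    · have := hle i
      unfold onesElseTwos at this
      split_ifs at this <;> omega
    · ext i
      have := hle i
      by_cases h : i ∈ S <;> simp [onesElseTwos, h, hS] at this ⊢; omega

lemma card_filter_pos_filter_eq_one_eq (S : Finset ι) (n : ℕ) :
    #{f ∈ piAntidiag univ (#S + 2 * #Sᶜ + n) |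
        (∀ i, 0 < f i) ∧ ({i | f i = 1} : Finset ι) = S} = (#Sᶜ).multichoose n := by
  simp_rw [pos_and_filter_eq_one_eq_iff, ← sum_onesElseTwos]
  rw [card_filter_piAntidiag_le_eqOn, card_piAntidiag_nat]

lemma card_filter_pos_card_filter_eq_one (s n : ℕ) :
    #{f ∈ piAntidiag (univ : Finset ι) (s + 2 * (Fintype.card ι - s) + n) |
        (∀ i, 0 < f i) ∧ #{i | f i = 1} = s} =
      (Fintype.card ι).choose s * (Fintype.card ι - s).multichoose n := by
  rw [card_eq_sum_card_fiberwise (f := fun f => ({i | f i = 1} : Finset ι))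
    (t := powersetCard s univ) fun f hf => mem_powersetCard_univ.2 (mem_filter.1 hf).2.2,
    sum_const_nat fun S hS => ?_, card_powersetCard, card_univ]
  obtain rfl := mem_powersetCard_univ.1 hS
  rw [filter_filter, ← card_compl, ← card_filter_pos_filter_eq_one_eq]
  congr 1
  exact filter_congr fun f _ =>
    ⟨fun ⟨⟨hpos, _⟩, hones⟩ => ⟨hpos, hones⟩,
      fun ⟨hpos, hones⟩ => ⟨⟨hpos, hones ▸ rfl⟩, hones⟩⟩

lemma add_two_mul_le_sum_of_pos {f : ι → ℕ} (hpos : ∀ i, 0 < f i) :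
    #{i | f i = 1} + 2 * (Fintype.card ι - #{i | f i = 1}) ≤ ∑ i, f i := by
  obtain ⟨hle, -⟩ := pos_and_filter_eq_one_eq_iff.1 ⟨hpos, rfl⟩
  rw [← card_compl, ← sum_onesElseTwos]
  exact sum_le_sum fun i _ => hle i

end Compositions

theorem card_compositions_with_ones_general (k r s : ℕ) (hs : s ≤ r) :
    (((Finset.Nat.antidiagonalTuple r k).filter fun f =>
        (∀ i, 0 < f i) ∧
          (Finset.univ.filter fun i => f i = 1).card = s).card : ℤ) =
      ibinom r s * ibinom ((k : ℤ) - r - 1) ((r : ℤ) - s - 1) := by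
  rw [← piAntidiag_univ_fin_eq_antidiagonalTuple]
  by_cases hlarge : s + 2 * (r - s) ≤ k
  · obtain ⟨n, rfl⟩ := Nat.exists_eq_add_of_le hlarge
    have hcount := card_filter_pos_card_filter_eq_one (ι := Fin r) s n
    rw [Fintype.card_fin] at hcount
    -- the two sides differ only in the `Decidable` instance of `∀ i : Fin r, 0 < f i`
    convert congrArg (Nat.cast : ℕ → ℤ) hcount using 4
    rw [ibinom_natCast_of_le hs,
      show (↑(s + 2 * (r - s) + n) : ℤ) - r - 1 = ((r - s : ℕ) : ℤ) + n - 1 by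
        push_cast [hs]; ring,
      show (r : ℤ) - s - 1 = ((r - s : ℕ) : ℤ) - 1 by push_cast [hs]; ring,
      ibinom_add_sub_one_sub_one, Nat.cast_mul]
  · rw [ibinom_eq_zero_of_lt (a := (k : ℤ) - r - 1) (by omega), mul_zero, Nat.cast_eq_zero,
      card_eq_zero, filter_eq_empty_iff]
    rintro f hf ⟨hpos, rfl⟩
    have hsum := add_two_mul_le_sum_of_pos hpos
    rw [Fintype.card_fin, (mem_piAntidiag_iff_sum_univ.1 hf).1] at hsum
    exact hlarge hsum

/-- The number of compositions of `k` into exactly `r` (positive) parts with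
exactly `s` parts equal to `1` is `binom(r, s) · binom(k - r - 1, r - s - 1)`. -/
theorem card_compositions_with_ones (k r s : ℕ) (hk : 0 < k) (hr : 0 < r)
    (hrk : r ≤ k) (hs : s ≤ r) :
    (((Finset.Nat.antidiagonalTuple r k).filter fun f =>
        (∀ i, 0 < f i) ∧
          (Finset.univ.filter fun i => f i = 1).card = s).card : ℤ) =
      ibinom r s * ibinom ((k : ℤ) - r - 1) ((r : ℤ) - s - 1) :=
  card_compositions_with_ones_general k r s hs
end

section
/- For positive integers k and r with r ≤ k, one has Σ_{α ∈ Comp(k,r)} (-1)^{ℓ₂(α)} = Σ_{s=0}^{r} (-1)^{r-s} binom(r, s) binom(k - r - 1, r - s - 1), where the convention binom(-1,-1) = 1 (and binom(-1,n) = binom(n,-1) = 0 for n ≠ -1) is used. -/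
open Finset

theorem Finset.Nat.sum_antidiagonalTuple_succ {M : Type*} [AddCommMonoid M] (k n : ℕ)
    (g : (Fin (k + 1) → ℕ) → M) :
    ∑ f ∈ Nat.antidiagonalTuple (k + 1) n, g f =
      ∑ p ∈ antidiagonal n, ∑ t ∈ Nat.antidiagonalTuple k p.2, g (Fin.cons p.1 t) := by
  simp only [Finset.sum, Nat.antidiagonalTuple, Multiset.Nat.antidiagonalTuple,
    List.Nat.antidiagonalTuple]
  rw [← Multiset.coe_bind, Multiset.map_bind, Multiset.sum_bind]
  simp only [Multiset.map_coe, List.map_map, Multiset.sum_coe, sum_map_val]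
  rfl

theorem Finset.Nat.sum_filter_pos_antidiagonalTuple {M : Type*} [AddCommMonoid M] {r k : ℕ}
    (hrk : r ≤ k) (g : (Fin r → ℕ) → M) :
    ∑ f ∈ (Nat.antidiagonalTuple r k).filter (fun f => ∀ i, 0 < f i), g f =
      ∑ f ∈ Nat.antidiagonalTuple r (k - r), g (f + 1) := by
  symm
  refine sum_nbij' (· + 1) (· - 1) ?_ ?_ ?_ ?_ fun _ _ => rfl
  · intro f hf
    refine mem_filter.2 ⟨Nat.mem_antidiagonalTuple.2 ?_, fun i => Nat.succ_pos _⟩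
    simp only [Pi.add_apply, Pi.one_apply, sum_add_distrib, Nat.mem_antidiagonalTuple.1 hf,
      Fin.sum_const, smul_eq_mul, mul_one, Nat.sub_add_cancel hrk]
  · intro f hf
    rw [mem_filter, Nat.mem_antidiagonalTuple] at hf
    rw [Nat.mem_antidiagonalTuple, ← hf.1]
    simp only [Pi.sub_apply, Pi.one_apply]
    rw [sum_tsub_distrib _ fun i _ => hf.2 i, Fin.sum_const, smul_eq_mul, mul_one]
  · intro f _
    exact add_tsub_cancel_right f 1
  · intro f hf
    funext i
    have := (mem_filter.1 hf).2 i
    simp only [Pi.add_apply, Pi.sub_apply, Pi.one_apply]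
    omega

theorem sum_neg_one_pow_mul_choose_succ_mul {R : Type*} [CommRing R] (r : ℕ) (c : ℕ → R) :
    ∑ j ∈ range (r + 2), (-1) ^ j * ((r + 1).choose j : R) * c j =
      ∑ j ∈ range (r + 1), (-1) ^ j * (r.choose j : R) * (c j - c (j + 1)) := by
  have := sum_choose_succ_mul (fun j _ => (-1 : R) ^ j * c j) r
  simp only [mul_sub, sum_sub_distrib, mul_comm _ (Nat.choose _ _ : R), mul_assoc, this]
  rw [sub_eq_add_neg, ← sum_neg_distrib]
  congr 1
  refine sum_congr rfl fun j _ => ?_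
  ring

theorem ibinom_natCast (n k : ℕ) : ibinom n k = n.choose k := by
  rw [ibinom, if_neg (by omega)]
  split_ifs with h
  · simp
  · rw [Nat.choose_eq_zero_of_lt (by omega), Nat.cast_zero]

theorem ibinom_neg_one_left {b : ℤ} (hb : 0 ≤ b) : ibinom (-1) b = 0 := by
  simp [ibinom]; omega

/-- Pascal's rule, which the convention `ibinom (-1) (-1) = 1` extends down to `a = 0`. -/
theorem ibinom_sub_one_add_ibinom_sub_one {a b : ℤ} (ha : 0 ≤ a) (hb : 0 ≤ b) :
    ibinom (a - 1) (b - 1) + ibinom (a - 1) b = ibinom a b := by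
  obtain ⟨n, rfl⟩ := Int.eq_ofNat_of_zero_le ha
  obtain ⟨k, rfl⟩ := Int.eq_ofNat_of_zero_le hb
  rcases n with _ | n <;> rcases k with _ | k
  · simp [ibinom]
  · simp [ibinom]; omega
  · simp [ibinom]; omega
  · have h₁ := ibinom_natCast n (k + 1)
    have h₂ := ibinom_natCast (n + 1) (k + 1)
    push_cast at h₁ h₂ ⊢
    rw [add_sub_cancel_right, add_sub_cancel_right, ibinom_natCast, h₁, h₂,
      Nat.choose_succ_succ, Nat.cast_add]

theorem sum_antidiagonal_ibinom_sub_one (m j : ℕ) :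
    ∑ p ∈ antidiagonal m, ibinom ((p.2 : ℤ) - 1) ((j : ℤ) - 1) = ibinom m j := by
  induction m with
  | zero =>
    have h := ibinom_sub_one_add_ibinom_sub_one le_rfl (Int.natCast_nonneg j)
    rw [zero_sub, ibinom_neg_one_left (Int.natCast_nonneg j), add_zero] at h
    simpa using h
  | succ m ih =>
    have h :=
      ibinom_sub_one_add_ibinom_sub_one (a := m + 1) (by positivity) (Int.natCast_nonneg j)
    rw [add_sub_cancel_right] at h
    rw [Nat.sum_antidiagonal_succ, ih, Nat.cast_succ, add_sub_cancel_right, ← h]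

theorem sum_antidiagonal_neg_one_pow_mul_ibinom_sub_one (m j : ℕ) :
    ∑ p ∈ antidiagonal m,
        (-1 : ℤ) ^ (if 0 < p.1 then 1 else 0) * ibinom ((p.2 : ℤ) - 1) ((j : ℤ) - 1) =
      ibinom ((m : ℤ) - 1) ((j : ℤ) - 1) - ibinom ((m : ℤ) - 1) j := by
  cases m with
  | zero => simp [ibinom_neg_one_left]
  | succ m =>
    rw [Nat.sum_antidiagonal_succ]
    simp only [Nat.succ_pos, lt_irrefl, if_true, if_false, pow_zero, pow_one, one_mul,
      neg_one_mul, sum_neg_distrib, sum_antidiagonal_ibinom_sub_one]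
    rw [Nat.cast_succ, add_sub_cancel_right, ← sub_eq_add_neg]

theorem sum_antidiagonalTuple_neg_one_pow_card_pos (r m : ℕ) :
    ∑ f ∈ Nat.antidiagonalTuple r m, (-1 : ℤ) ^ #{i | 0 < f i} =
      ∑ j ∈ range (r + 1),
        (-1) ^ j * (r.choose j : ℤ) * ibinom ((m : ℤ) - 1) ((j : ℤ) - 1) := by
  induction r generalizing m with
  | zero => cases m <;> simp [ibinom]
  | succ r ih =>
    calc ∑ f ∈ Nat.antidiagonalTuple (r + 1) m, (-1 : ℤ) ^ #{i | 0 < f i}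
        = ∑ p ∈ antidiagonal m, (-1 : ℤ) ^ (if 0 < p.1 then 1 else 0) *
            ∑ t ∈ Nat.antidiagonalTuple r p.2, (-1 : ℤ) ^ #{i | 0 < t i} := by
          simp only [Nat.sum_antidiagonalTuple_succ, Fin.card_filter_univ_succ', Fin.cons_zero,
            Fin.cons_succ, pow_add, mul_sum]
      _ = ∑ j ∈ range (r + 1), (-1) ^ j * (r.choose j : ℤ) *
            (ibinom ((m : ℤ) - 1) ((j : ℤ) - 1) - ibinom ((m : ℤ) - 1) j) := by
          simp only [ih, mul_sum]
          rw [sum_comm]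
          refine sum_congr rfl fun j _ => ?_
          rw [← sum_antidiagonal_neg_one_pow_mul_ibinom_sub_one, mul_sum]
          refine sum_congr rfl fun p _ => ?_
          ring
      _ = _ := by
          rw [sum_neg_one_pow_mul_choose_succ_mul]
          simp only [Nat.cast_succ, add_sub_cancel_right]

theorem sum_comp_sign_general (k r : ℕ) (hrk : r ≤ k) :
    ∑ f ∈ (Finset.Nat.antidiagonalTuple r k).filter (fun f => ∀ i, 0 < f i),
        (-1 : ℤ) ^ (Finset.univ.filter fun i => 2 ≤ f i).card =
      ∑ s ∈ Finset.range (r + 1),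
        (-1 : ℤ) ^ (r - s) * ibinom r s * ibinom ((k : ℤ) - r - 1) ((r : ℤ) - s - 1) := by
  rw [Nat.sum_filter_pos_antidiagonalTuple hrk]
  simp only [Pi.add_apply, Pi.one_apply, Nat.reduceLeDiff, Order.one_le_iff_pos]
  rw [sum_antidiagonalTuple_neg_one_pow_card_pos, ← sum_range_reflect]
  refine sum_congr rfl fun j hj => ?_
  have hjr : j ≤ r := Nat.lt_succ_iff.1 (mem_range.1 hj)
  rw [add_tsub_cancel_right, ibinom_natCast, Nat.choose_symm hjr, Nat.cast_sub hjr,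
    Nat.cast_sub hrk]

/-- `Σ_{α ∈ Comp(k,r)} (-1)^{ℓ₂(α)}
      = Σ_{s=0}^{r} (-1)^{r-s} binom(r,s) binom(k-r-1, r-s-1)`,
where `ℓ₂(α)` is the number of parts of `α` that are at least `2`. -/
theorem sum_comp_sign (k r : ℕ) (hk : 0 < k) (hr : 0 < r) (hrk : r ≤ k) :
    ∑ f ∈ (Finset.Nat.antidiagonalTuple r k).filter (fun f => ∀ i, 0 < f i),
        (-1 : ℤ) ^ (Finset.univ.filter fun i => 2 ≤ f i).card =
      ∑ s ∈ Finset.range (r + 1),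
        (-1 : ℤ) ^ (r - s) * ibinom r s * ibinom ((k : ℤ) - r - 1) ((r : ℤ) - s - 1) :=
  sum_comp_sign_general k r hrk
end

section
/- In the ring of formal power series in x and z, the following identity holds for each positive integer k: 1/((1-z)(1 - Σ_{i=1}^{k} x^i Σ_{j=0}^{i} z^j)) = Σ_{r ≥ 0} z^r (1 - Σ_{i=1}^{k} x^i z^i)^r / (1 - x - x^2 - ⋯ - x^k)^{1+r}. -/
/-!
With `d = 1 - x - ⋯ - x^k` and `A = 1 - Σ_{i=1}^k x^i z^i`, the geometric sums in `z` give
`(1 - z)(1 - S) = d - z A`, while the right-hand side is `Σ_r d⁻¹ (z A d⁻¹)^r`. Its partial sums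
satisfy `(d - z A) Σ_{r ≤ n} d⁻¹ (z A d⁻¹)^r = 1 - (z A d⁻¹)^(n+1)`, and the error term has
`z`-order greater than `n`, so the `z^n` coefficient of the product is that of `1`.
-/

open PowerSeries Finset

namespace PowerSeries

variable {R : Type*}

theorem coeff_mul_eq_of_trunc_eq [CommSemiring R] {n : ℕ} {f g : R⟦X⟧}
    (h : trunc (n + 1) f = trunc (n + 1) g) (p : R⟦X⟧) : coeff n (p * f) = coeff n (p * g) := by
  rw [← coeff_coe_trunc_of_lt (lt_add_one n), ← trunc_mul_trunc, h, trunc_mul_trunc,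
    coeff_coe_trunc_of_lt (lt_add_one n)]

theorem trunc_mk_coeff_sum_range [Semiring R] {f : ℕ → R⟦X⟧} (hf : ∀ r, X ^ r ∣ f r) (n : ℕ) :
    trunc (n + 1) (mk fun m => coeff m (∑ r ∈ range (m + 1), f r)) =
      trunc (n + 1) (∑ r ∈ range (n + 1), f r) := by
  ext m
  simp only [coeff_trunc, coeff_mk]
  split_ifs with hm
  · rw [map_sum, map_sum]
    refine sum_subset (range_subset_range.mpr (by omega)) fun r hr hr' => ?_
    exact X_pow_dvd_iff.mp (hf r) m (by simp only [mem_range] at hr'; omega)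
  · rfl

theorem one_sub_X_mul_one_sub_sum_C_mul_geom_sum [CommRing R] (s : Finset ℕ) (c : ℕ → R) :
    (1 - X) * (1 - ∑ i ∈ s, C (c i) * ∑ j ∈ range (i + 1), (X : R⟦X⟧) ^ j) =
      C (1 - ∑ i ∈ s, c i) - X * (1 - ∑ i ∈ s, C (c i) * X ^ i) := by
  have hgeom (i : ℕ) : (1 - X) * (C (c i) * ∑ j ∈ range (i + 1), (X : R⟦X⟧) ^ j) =
      C (c i) - X * (C (c i) * X ^ i) := by
    rw [mul_left_comm, mul_neg_geom_sum, pow_succ]; ring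
  rw [mul_sub, mul_sum, sum_congr rfl fun i _ => hgeom i, sum_sub_distrib, ← mul_sum, map_sub,
    map_one, map_sum]
  ring

end PowerSeries

theorem sub_mul_sum_pow_mul_pow_mul_pow_of_mul_eq_one {α : Type*} [CommRing α] {d u : α} (hdu : d * u = 1)
    (a b : α) (n : ℕ) :
    (d - a * b) * ∑ r ∈ range n, a ^ r * b ^ r * u ^ (1 + r) = 1 - (a * b * u) ^ n := by
  have hterm (r : ℕ) : a ^ r * b ^ r * u ^ (1 + r) = u * (a * b * u) ^ r := by ring
  have hfactor : (d - a * b) * u = 1 - a * b * u := by rw [sub_mul, hdu]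
  rw [sum_congr rfl fun r _ => hterm r, ← mul_sum, ← mul_assoc, hfactor, mul_neg_geom_sum]

theorem geom_series_identity_general (k : ℕ) :
    letI R := PowerSeries ℚ
    letI x : R := PowerSeries.X
    letI S : PowerSeries R :=
      ∑ i ∈ Finset.Icc 1 k, PowerSeries.C (x ^ i) *
        ∑ j ∈ Finset.range (i + 1), PowerSeries.X ^ j
    letI dInv : R := PowerSeries.invOfUnit (1 - ∑ i ∈ Finset.Icc 1 k, x ^ i) 1
    letI term : ℕ → PowerSeries R := fun r =>
      PowerSeries.X ^ r *
        (1 - ∑ i ∈ Finset.Icc 1 k, PowerSeries.C (x ^ i) * PowerSeries.X ^ i) ^ r *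
        PowerSeries.C dInv ^ (1 + r)
    letI F : PowerSeries R := PowerSeries.mk fun n =>
      PowerSeries.coeff n (∑ r ∈ Finset.range (n + 1), term r)
    (1 - PowerSeries.X) * (1 - S) * F = 1 := by
  beta_reduce
  set A : ℚ⟦X⟧⟦X⟧ := 1 - ∑ i ∈ Icc 1 k, C (X ^ i) * X ^ i
  set u : ℚ⟦X⟧ := invOfUnit (1 - ∑ i ∈ Icc 1 k, X ^ i) 1
  have hu : C (1 - ∑ i ∈ Icc 1 k, X ^ i) * C u = (1 : ℚ⟦X⟧⟦X⟧) := by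
    rw [← map_mul, mul_invOfUnit _ _ ?_, map_one]
    simp only [map_sub, map_one, map_sum, map_pow, constantCoeff_X, Units.val_one, sub_eq_self]
    exact sum_eq_zero fun i hi => zero_pow (by grind)
  have hdiv (r : ℕ) : X ^ r ∣ X ^ r * A ^ r * C u ^ (1 + r) :=
    dvd_mul_of_dvd_left (dvd_mul_right _ _) _
  rw [one_sub_X_mul_one_sub_sum_C_mul_geom_sum (Icc 1 k) (fun i => X ^ i)]
  ext n
  rw [coeff_mul_eq_of_trunc_eq (trunc_mk_coeff_sum_range hdiv n),
    sub_mul_sum_pow_mul_pow_mul_pow_of_mul_eq_one hu, map_sub, mul_assoc, mul_pow,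
    X_pow_dvd_iff.mp (dvd_mul_right _ _) n (lt_add_one n), sub_zero]

/-- Work in `R⟦z⟧` where `R = ℚ⟦x⟧`.  Let
`S = Σ_{i=1}^k x^i Σ_{j=0}^i z^j`, let `d⁻¹` be the geometric-series inverse of
`1 - x - ⋯ - x^k` in `ℚ⟦x⟧`, and let `F` be the formal power series in `z`
whose coefficient of `z^n` is the (stabilizing) sum
`Σ_{r=0}^{n} [z^n] ( z^r (1 - Σ_{i=1}^k x^i z^i)^r (d⁻¹)^{1+r} )`
(each summand has `z`-order at least `r`, so this is the sum over all `r ≥ 0`).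
Then `F = 1 / ((1-z)(1 - S))`, i.e. `(1 - z)(1 - S) F = 1`. -/
theorem geom_series_identity (k : ℕ) (hk : 0 < k) :
    letI R := PowerSeries ℚ
    letI x : R := PowerSeries.X
    letI S : PowerSeries R :=
      ∑ i ∈ Finset.Icc 1 k, PowerSeries.C (x ^ i) *
        ∑ j ∈ Finset.range (i + 1), PowerSeries.X ^ j
    letI dInv : R := PowerSeries.invOfUnit (1 - ∑ i ∈ Finset.Icc 1 k, x ^ i) 1
    letI term : ℕ → PowerSeries R := fun r =>
      PowerSeries.X ^ r *
        (1 - ∑ i ∈ Finset.Icc 1 k, PowerSeries.C (x ^ i) * PowerSeries.X ^ i) ^ r *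
        PowerSeries.C dInv ^ (1 + r)
    letI F : PowerSeries R := PowerSeries.mk fun n =>
      PowerSeries.coeff n (∑ r ∈ Finset.range (n + 1), term r)
    (1 - PowerSeries.X) * (1 - S) * F = 1 :=
  geom_series_identity_general k
end

section
/- For each positive integer k, the number of finite sequences ((u_1,v_1), …, (u_r,v_r)) (r ≥ 0 arbitrary) of pairs of nonnegative integers with 1 ≤ u_i + v_i ≤ k for each i, with v_1 + ⋯ + v_r ≤ k, and with total sum u_1 + ⋯ + u_r + v_1 + ⋯ + v_r = b, equals the coefficient of x^b z^k in the formal power series (1/(1-z)) · 1/(1 - Σ_{i=1}^{k} x^i Σ_{j=0}^{i} z^j). -/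
/-!
Let `f n m` count the sequences of total `n` whose second components sum to at most `m`.
Splitting off the first pair `(u, v)` of a nonempty sequence gives
`f n m = [n = 0] + ∑ f (n - u - v) (m - v)`, summed over the pairs with `1 ≤ u + v ≤ k`,
`u + v ≤ n` and `v ≤ m`. For `F = ∑ f n m xⁿ zᵐ` and
`W = ∑ x^(u+v) z^v = ∑_{i=1}^k xⁱ ∑_{j=0}^i zʲ` this recursion says `(1 - W) F = 1/(1 - z)`,
so `F = (1/(1 - z)) · 1/(1 - W)`.
-/

open PowerSeries Finset

/-- The pair `(u, v)` stands for the word `0^u 1^v`. -/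
def letters (k : ℕ) : Finset (ℕ × ℕ) :=
  (range (k + 1) ×ˢ range (k + 1)).filter fun p => 1 ≤ p.1 + p.2 ∧ p.1 + p.2 ≤ k

lemma mem_letters {k : ℕ} {p : ℕ × ℕ} : p ∈ letters k ↔ 1 ≤ p.1 + p.2 ∧ p.1 + p.2 ≤ k := by
  simp only [letters, mem_filter, mem_product, mem_range]
  omega

lemma sum_Icc_sum_range_eq_sum_letters {M : Type*} [AddCommMonoid M] (k : ℕ) (g : ℕ → ℕ → M) :
    ∑ i ∈ Icc 1 k, ∑ j ∈ range (i + 1), g i j = ∑ p ∈ letters k, g (p.1 + p.2) p.2 := by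
  rw [sum_sigma']
  refine sum_nbij' (fun x => (x.1 - x.2, x.2)) (fun p => ⟨p.1 + p.2, p.2⟩) ?_ ?_ ?_ ?_ ?_
  all_goals simp only [mem_sigma, mem_Icc, mem_range, mem_letters, Sigma.forall, Prod.forall]
  · intro i j; omega
  · intro u v; omega
  · intro i j h
    simp only [Sigma.mk.injEq, heq_eq_eq, and_true]
    omega
  · intro u v _
    simp
  · intro i j h
    congr
    omega

def embeddings (k n m : ℕ) : Set (List (ℕ × ℕ)) :=
  {l | (∀ p ∈ l, 1 ≤ p.1 + p.2 ∧ p.1 + p.2 ≤ k) ∧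
    (l.map Prod.snd).sum ≤ m ∧ (l.map fun p => p.1 + p.2).sum = n}

lemma embeddings_zero (k m : ℕ) : embeddings k 0 m = {[]} := by
  ext (_ | ⟨p, l⟩)
  · simp [embeddings]
  · simp only [embeddings, Set.mem_ofPred_eq, List.mem_cons, List.map_cons, List.sum_cons,
      Set.mem_singleton_iff, reduceCtorEq, iff_false]
    rintro ⟨h, -, hsum⟩
    have := h p (Or.inl rfl)
    omega

def consEmbedding (k b m : ℕ) :
    (Σ p : ((letters k).filter fun p => p.1 + p.2 ≤ b + 1 ∧ p.2 ≤ m),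
      embeddings k (b + 1 - (p.1.1 + p.1.2)) (m - p.1.2)) → embeddings k (b + 1) m :=
  fun x => ⟨x.1.1 :: x.2.1, by
    obtain ⟨⟨p, hp⟩, t, ht, htm, htn⟩ := x
    rw [mem_filter, mem_letters] at hp
    dsimp only at htm htn ⊢
    refine ⟨?_, ?_, ?_⟩
    · simpa only [List.mem_cons, forall_eq_or_imp] using ⟨hp.1, ht⟩
    · simp only [List.map_cons, List.sum_cons]; omega
    · simp only [List.map_cons, List.sum_cons]; omega⟩

lemma consEmbedding_bijective (k b m : ℕ) : Function.Bijective (consEmbedding k b m) := by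
  constructor
  · rintro ⟨⟨p, hp⟩, t, ht⟩ ⟨⟨q, hq⟩, s, hs⟩ h
    obtain ⟨rfl, rfl⟩ := List.cons_eq_cons.mp (congrArg Subtype.val h)
    rfl
  · rintro ⟨_ | ⟨p, t⟩, hl, hlm, hln⟩
    · simp at hln
    · simp only [List.mem_cons, forall_eq_or_imp, List.map_cons, List.sum_cons] at hl hlm hln
      exact ⟨⟨⟨p, mem_filter.mpr ⟨mem_letters.mpr hl.1, by omega, by omega⟩⟩,
        ⟨t, hl.2, by dsimp only; omega, by dsimp only; omega⟩⟩, rfl⟩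

instance finite_embeddings (k n m : ℕ) : Finite (embeddings k n m) := by
  induction n using Nat.strong_induction_on generalizing m with
  | _ n ih =>
    cases n with
    | zero => rw [embeddings_zero]; infer_instance
    | succ b =>
      have : ∀ p : ((letters k).filter fun p => p.1 + p.2 ≤ b + 1 ∧ p.2 ≤ m),
          Finite (embeddings k (b + 1 - (p.1.1 + p.1.2)) (m - p.1.2)) := fun p => by
        have := mem_letters.mp (mem_filter.mp p.2).1
        exact ih _ (by omega) _
      exact Finite.of_surjective _ (consEmbedding_bijective k b m).2

lemma card_embeddings (k n m : ℕ) :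
    Nat.card (embeddings k n m) = (if n = 0 then 1 else 0) +
      ∑ p ∈ (letters k).filter (fun p => p.1 + p.2 ≤ n ∧ p.2 ≤ m),
        Nat.card (embeddings k (n - (p.1 + p.2)) (m - p.2)) := by
  cases n with
  | zero =>
    rw [embeddings_zero, sum_eq_zero fun p hp => ?_]
    · simp
    · have := mem_letters.mp (mem_filter.mp hp).1
      have := (mem_filter.mp hp).2
      omega
  | succ b =>
    rw [if_neg b.succ_ne_zero, zero_add,
      ← Nat.card_eq_of_bijective _ (consEmbedding_bijective k b m), Nat.card_sigma]
    exact sum_coe_sort (letters k |>.filter _)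
      fun p => Nat.card (embeddings k (b + 1 - (p.1 + p.2)) (m - p.2))

noncomputable section Series

variable (R : Type*) [CommRing R]

def weightSeries (k : ℕ) : R⟦X⟧⟦X⟧ :=
  ∑ p ∈ letters k, X ^ (p.1 + p.2) * C ((X : R⟦X⟧) ^ p.2)

def embeddingSeries (k : ℕ) : R⟦X⟧⟦X⟧ :=
  mk fun n => mk fun m => (Nat.card (embeddings k n m) : R)

lemma sum_X_pow_mul_C_geom_eq_weightSeries (k : ℕ) :
    ∑ i ∈ Icc 1 k, X ^ i * C (∑ j ∈ range (i + 1), (X : R⟦X⟧) ^ j) = weightSeries R k := by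
  simp only [map_sum, mul_sum]
  exact sum_Icc_sum_range_eq_sum_letters k fun i j => X ^ i * C ((X : R⟦X⟧) ^ j)

variable {R}

lemma coeff_coeff_weightSeries_mul (k n m : ℕ) (H : R⟦X⟧⟦X⟧) :
    coeff m (coeff n (weightSeries R k * H)) =
      ∑ p ∈ (letters k).filter (fun p => p.1 + p.2 ≤ n ∧ p.2 ≤ m),
        coeff (m - p.2) (coeff (n - (p.1 + p.2)) H) := by
  simp only [weightSeries, sum_mul, map_sum, sum_filter, mul_assoc, coeff_X_pow_mul', coeff_C_mul,
    apply_ite (coeff m), map_zero, ite_and]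

lemma constantCoeff_weightSeries (k : ℕ) : constantCoeff (weightSeries R k) = 0 := by
  simp only [weightSeries, map_sum, map_mul, map_pow, constantCoeff_X]
  refine sum_eq_zero fun p hp => ?_
  rw [zero_pow (by have := mem_letters.mp hp; omega), zero_mul]

lemma one_sub_weightSeries_mul_embeddingSeries (k : ℕ) :
    (1 - weightSeries R k) * embeddingSeries R k = C (PowerSeries.mk 1) := by
  ext n m
  rw [sub_mul, one_mul, map_sub, map_sub, coeff_coeff_weightSeries_mul, coeff_C]
  simp only [embeddingSeries, coeff_mk]
  rw [card_embeddings k n m]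
  push_cast
  rw [add_sub_cancel_right]
  split_ifs <;> simp

lemma invOfUnit_one_sub_X : invOfUnit (1 - X : R⟦X⟧) 1 = PowerSeries.mk 1 := by
  calc invOfUnit (1 - X : R⟦X⟧) 1 = PowerSeries.mk 1 * (1 - X) * invOfUnit (1 - X) 1 := by
        rw [mk_one_mul_one_sub_eq_one, one_mul]
    _ = PowerSeries.mk 1 := by rw [mul_assoc, mul_invOfUnit _ _ (by simp), mul_one]

lemma embeddingSeries_eq (k : ℕ) :
    embeddingSeries R k = C (invOfUnit (1 - X) 1) * invOfUnit (1 - weightSeries R k) 1 := by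
  rw [invOfUnit_one_sub_X, ← one_sub_weightSeries_mul_embeddingSeries, mul_comm, ← mul_assoc,
    invOfUnit_mul _ _ (by simp [constantCoeff_weightSeries]), one_mul]

end Series

theorem card_embeddings_eq_coeff_general (k b : ℕ) :
    letI B := PowerSeries ℚ
    letI z : B := PowerSeries.X
    letI W : PowerSeries B :=
      ∑ i ∈ Finset.Icc 1 k, PowerSeries.X ^ i *
        PowerSeries.C (∑ j ∈ Finset.range (i + 1), z ^ j)
    letI G : PowerSeries B :=
      PowerSeries.C (PowerSeries.invOfUnit (1 - z) 1) *
        PowerSeries.invOfUnit (1 - W) 1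
    (Nat.card {l : List (ℕ × ℕ) //
        (∀ p ∈ l, 1 ≤ p.1 + p.2 ∧ p.1 + p.2 ≤ k) ∧
          (l.map Prod.snd).sum ≤ k ∧
          (l.map fun p => p.1 + p.2).sum = b} : ℚ) =
      PowerSeries.coeff k (PowerSeries.coeff b G) := by
  rw [sum_X_pow_mul_C_geom_eq_weightSeries, ← embeddingSeries_eq]
  simp only [embeddingSeries, coeff_mk]
  rfl

/-- For a positive integer `k`, the number of finite sequences
`((u₁,v₁), …, (u_r,v_r))` of pairs of nonnegative integers with
`1 ≤ uᵢ + vᵢ ≤ k` for each `i`, `v₁ + ⋯ + v_r ≤ k` and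
`u₁ + ⋯ + u_r + v₁ + ⋯ + v_r = b` equals the coefficient of `x^b z^k` in
`(1/(1-z)) · 1/(1 - Σ_{i=1}^k x^i Σ_{j=0}^i z^j)`.
We work in `B⟦x⟧` with `B = ℚ⟦z⟧`; both factors have constant term `1` in `B`
resp. `ℚ`, and their inverses are taken as the geometric-series inverses. -/
theorem card_embeddings_eq_coeff (k b : ℕ) (hk : 0 < k) :
    letI B := PowerSeries ℚ
    letI z : B := PowerSeries.X
    letI W : PowerSeries B :=
      ∑ i ∈ Finset.Icc 1 k, PowerSeries.X ^ i *
        PowerSeries.C (∑ j ∈ Finset.range (i + 1), z ^ j)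
    letI G : PowerSeries B :=
      PowerSeries.C (PowerSeries.invOfUnit (1 - z) 1) *
        PowerSeries.invOfUnit (1 - W) 1
    (Nat.card {l : List (ℕ × ℕ) //
        (∀ p ∈ l, 1 ≤ p.1 + p.2 ∧ p.1 + p.2 ≤ k) ∧
          (l.map Prod.snd).sum ≤ k ∧
          (l.map fun p => p.1 + p.2).sum = b} : ℚ) =
      PowerSeries.coeff k (PowerSeries.coeff b G) :=
  card_embeddings_eq_coeff_general k b
end

section
/- For each positive integer b, the number of finite sequences ((u_1,v_1), …, (u_r,v_r)) of pairs of nonnegative integers with u_i + v_i ≥ 1 for each i and u_1 + ⋯ + u_r + v_1 + ⋯ + v_r = b (with no bound on the v_i or their sum) equals J(b), where J(0)=1, J(1)=2, J(2)=7, and J(b) = 4J(b-1) - 2J(b-2) for b ≥ 3. -/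
/-!
Let `N b` be the number of such sequences of total `b`. Splitting off the first pair, whose
total `n ≥ 1` can be split as `u + v` in `n + 1` ways, gives
`N (b + 1) = ∑_{m ≤ b} (b + 2 - m) N m`. Taking differences twice removes the linear weights
and leaves `N (b + 3) = 4 N (b + 2) - 2 N (b + 1)`, the recurrence of `J`.
-/

open Finset

theorem LinearRecurrence.isSolution_order_two_iff {R : Type*} [CommSemiring R] (a c : R)
    (u : ℕ → R) :
    (⟨2, ![a, c]⟩ : LinearRecurrence R).IsSolution u ↔
      ∀ n, u (n + 2) = a * u n + c * u (n + 1) := by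
  simp [LinearRecurrence.IsSolution, Fin.sum_univ_two]

def PairComposition (b : ℕ) : Type :=
  {l : List (ℕ × ℕ) // (∀ p ∈ l, 1 ≤ p.1 + p.2) ∧ (l.map fun p => p.1 + p.2).sum = b}

namespace PairComposition

theorem eq_nil_of_zero (l : PairComposition 0) : l.1 = [] := by
  obtain ⟨_ | ⟨p, t⟩, hpos, hsum⟩ := l
  · rfl
  · have := hpos p List.mem_cons_self
    simp only [List.map_cons, List.sum_cons] at hsum
    omega

instance : Subsingleton (PairComposition 0) :=
  ⟨fun l l' => Subtype.ext ((eq_nil_of_zero l).trans (eq_nil_of_zero l').symm)⟩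

theorem card_zero : Nat.card (PairComposition 0) = 1 :=
  Nat.card_eq_one_iff_unique.mpr ⟨inferInstance, ⟨⟨[], by simp⟩⟩⟩

def cons (b : ℕ) :
    (Σ m : Fin (b + 1), antidiagonal (b + 1 - m) × PairComposition m) → PairComposition (b + 1)
  | ⟨m, p, t⟩ =>
    ⟨p.1 :: t.1, by
      have hp := mem_antidiagonal.mp p.2
      refine ⟨fun q hq => ?_, ?_⟩
      · rcases List.mem_cons.mp hq with rfl | hq
        · omega
        · exact t.2.1 q hq
      · simp only [List.map_cons, List.sum_cons, t.2.2, hp]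
        omega⟩

theorem cons_injective (b : ℕ) : Function.Injective (cons b) := by
  rintro ⟨m, ⟨p, _⟩, ⟨t, ht⟩⟩ ⟨m', ⟨p', _⟩, ⟨t', ht'⟩⟩ h
  obtain ⟨rfl, rfl⟩ := List.cons.inj (congrArg Subtype.val h)
  obtain rfl : m = m' := Fin.ext (ht.2.symm.trans ht'.2)
  rfl

theorem cons_surjective (b : ℕ) : Function.Surjective (cons b) := by
  rintro ⟨_ | ⟨p, t⟩, hpos, hsum⟩
  · simp at hsum
  · have hp := hpos p List.mem_cons_self
    simp only [List.map_cons, List.sum_cons] at hsum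
    exact ⟨⟨⟨(t.map fun q => q.1 + q.2).sum, by omega⟩,
      ⟨p, mem_antidiagonal.mpr (by dsimp only; omega)⟩,
      ⟨t, fun q hq => hpos q (List.mem_cons_of_mem p hq), rfl⟩⟩, rfl⟩

instance (b : ℕ) : Finite (PairComposition b) := by
  induction b using Nat.strong_induction_on with
  | _ b ih =>
    cases b with
    | zero => infer_instance
    | succ b =>
      have (m : Fin (b + 1)) : Finite (PairComposition m) := ih m (by omega)
      exact Finite.of_surjective _ (cons_surjective b)

theorem card_succ (b : ℕ) :
    Nat.card (PairComposition (b + 1)) =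
      ∑ m ∈ range (b + 1), (b + 2 - m) * Nat.card (PairComposition m) := by
  rw [← Nat.card_eq_of_bijective _ ⟨cons_injective b, cons_surjective b⟩, Nat.card_sigma,
    ← Fin.sum_univ_eq_sum_range (fun m => (b + 2 - m) * Nat.card (PairComposition m))]
  refine Fintype.sum_congr _ _ fun m => ?_
  rw [Nat.card_prod, Nat.card_eq_finsetCard, Nat.card_antidiagonal]
  congr 1
  omega

theorem card_add_two (b : ℕ) :
    Nat.card (PairComposition (b + 2)) =
      3 * Nat.card (PairComposition (b + 1)) +
        ∑ m ∈ range (b + 1), Nat.card (PairComposition m) := by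
  have hweights : ∑ m ∈ range (b + 1), (b + 1 + 2 - m) * Nat.card (PairComposition m) =
      Nat.card (PairComposition (b + 1)) +
        ∑ m ∈ range (b + 1), Nat.card (PairComposition m) := by
    rw [card_succ, ← sum_add_distrib]
    refine sum_congr rfl fun m hm => ?_
    rw [show b + 1 + 2 - m = b + 2 - m + 1 by have := mem_range.mp hm; omega, add_one_mul]
  rw [card_succ (b + 1), sum_range_succ, hweights, Nat.add_sub_cancel_left]
  ring

theorem card_add_three (b : ℕ) :
    Nat.card (PairComposition (b + 3)) + 2 * Nat.card (PairComposition (b + 1)) =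
      4 * Nat.card (PairComposition (b + 2)) := by
  have h₁ := card_add_two b
  have h₂ : Nat.card (PairComposition (b + 3)) =
      3 * Nat.card (PairComposition (b + 2)) +
        ∑ m ∈ range (b + 2), Nat.card (PairComposition m) := card_add_two (b + 1)
  rw [sum_range_succ] at h₂
  omega

theorem card_one : Nat.card (PairComposition 1) = 2 := by
  simp [card_succ 0, card_zero]

theorem card_two : Nat.card (PairComposition 2) = 7 := by
  simp [card_add_two 0, card_one, card_zero]

end PairComposition

theorem card_unbounded_embeddings_general (J : ℕ → ℤ) (h1 : J 1 = 2)
    (h2 : J 2 = 7) (hrec : ∀ b, 3 ≤ b → J b = 4 * J (b - 1) - 2 * J (b - 2)) :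
    ∀ b : ℕ, 1 ≤ b →
      (Nat.card {l : List (ℕ × ℕ) //
          (∀ p ∈ l, 1 ≤ p.1 + p.2) ∧
            (l.map fun p => p.1 + p.2).sum = b} : ℤ) = J b := by
  let E : LinearRecurrence ℤ := ⟨2, ![-2, 4]⟩
  have hcard : E.IsSolution fun n => (Nat.card (PairComposition (n + 1)) : ℤ) :=
    (LinearRecurrence.isSolution_order_two_iff _ _ _).mpr fun n => by
      show (Nat.card (PairComposition (n + 3)) : ℤ) =
        -2 * Nat.card (PairComposition (n + 1)) + 4 * Nat.card (PairComposition (n + 2))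
      have := PairComposition.card_add_three n
      omega
  have hJ : E.IsSolution fun n => J (n + 1) :=
    (LinearRecurrence.isSolution_order_two_iff _ _ _).mpr fun n => by
      show J (n + 3) = -2 * J (n + 1) + 4 * J (n + 2)
      rw [hrec (n + 3) (by omega), show n + 3 - 1 = n + 2 by omega, show n + 3 - 2 = n + 1 by omega]
      ring
  have heq := (E.eq_iff_eqOn_range_order _ _ hcard hJ).mpr fun n hn => by
    rw [coe_range, Set.mem_Iio] at hn
    interval_cases n <;> simp [PairComposition.card_one, PairComposition.card_two, h1, h2]
  intro b hb
  obtain ⟨n, rfl⟩ := Nat.exists_eq_add_of_le' hb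
  exact congrFun heq n

/-- For `b ≥ 1`, the number of finite sequences `((u₁,v₁), …, (u_r,v_r))` of
pairs of nonnegative integers with `uᵢ + vᵢ ≥ 1` for each `i` and total sum
`u₁ + ⋯ + u_r + v₁ + ⋯ + v_r = b` equals `J(b)`, where `J(0) = 1`, `J(1) = 2`,
`J(2) = 7` and `J(b) = 4J(b-1) - 2J(b-2)` for `b ≥ 3`. -/
theorem card_unbounded_embeddings (J : ℕ → ℤ) (h0 : J 0 = 1) (h1 : J 1 = 2)
    (h2 : J 2 = 7) (hrec : ∀ b, 3 ≤ b → J b = 4 * J (b - 1) - 2 * J (b - 2)) :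
    ∀ b : ℕ, 1 ≤ b →
      (Nat.card {l : List (ℕ × ℕ) //
          (∀ p ∈ l, 1 ≤ p.1 + p.2) ∧
            (l.map fun p => p.1 + p.2).sum = b} : ℤ) = J b :=
  card_unbounded_embeddings_general J h1 h2 hrec
end
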